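/- Let g be a quadratic Lie algebra, E a vector space, φ : g → E linear with φ^a = φ(e^a). Then the element γ^g − Σ_a e_a ⊗ φ^a of C^∞(g) ⊗ Cl(g) ⊗ ΛE (odd part) is closed under the differential δ^g + Σ_a (∂/∂μ^a) ⊗ φ^a, where γ^g(μ) = q(λ(ad_μ)) and μ^a are the coordinates on g. -/

import Mathlib

noncomputable instance : Invertible (2 : ℝ) := invertibleOfNonzero two_ne_zero

/-!
Write `v : g → Cl` for the generators, so that `v x v y + v y v x = B(x, y)`. Quantizing gives
`γ(x) = ½ Σ v[x, e_a] v(e^a)` (the scalar correction is a multiple of `tr ad x`, which vanishes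
since `ad x` is skew) and `q(Θ) = -⅙ Σ v[e^b, e^c] v(e_b) v(e_c)` (the corrections are multiples
of the Casimir bracket `Σ [e^a, e_a] = 0`). Three identities in the Clifford algebra carry the
proof: `[γ(x), v y] = v[x, y]`; `q(Θ) v x + v x q(Θ) = γ(x)`; and `[γ(x), q(Θ)] = 0`, because by
the first identity `[γ(x), ·]` is a derivation extending `ad x`, and the structure-constant tensor
is `ad`-invariant by the Jacobi identity. The `φ^a` anticommute with `v`, hence with `q(Θ)`, so
`δ(e_a φ^a) = (q(Θ) v(e_a) + v(e_a) q(Θ)) φ^a = γ(e_a) φ^a`, while `δ γ(μ) = [q(Θ), γ(μ)] = 0`: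
the differential of `γ(μ) - Σ e_a φ^a` is `-Σ γ(e_a) φ^a`, which the derivative term cancels.
-/

open Finset

namespace CliffordAlgebra

variable {R M : Type*} [CommRing R] [AddCommGroup M] [Module R M] [Invertible (2 : R)]
  (Q : QuadraticForm R M)

theorem equivExterior_symm_ι_mul (m : M) (x : ExteriorAlgebra R M) :
    (equivExterior Q).symm (ExteriorAlgebra.ι R m * x) =
      ι Q m * (equivExterior Q).symm x - contractLeft (QuadraticMap.associated Q m)
        ((equivExterior Q).symm x) := by
  simp only [equivExterior, changeFormEquiv_symm, changeFormEquiv_apply]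
  rw [show ExteriorAlgebra.ι R m = ι 0 m from rfl, changeForm_ι_mul]
  congr 4
  ext
  simp

theorem equivExterior_symm_ι_mul_ι (m₁ m₂ : M) :
    (equivExterior Q).symm (ExteriorAlgebra.ι R m₁ * ExteriorAlgebra.ι R m₂) =
      ι Q m₁ * ι Q m₂ - algebraMap R _ (QuadraticMap.associated Q m₁ m₂) := by
  rw [equivExterior_symm_ι_mul]
  simp

theorem equivExterior_symm_ι_mul_ι_mul_ι (m₁ m₂ m₃ : M) :
    (equivExterior Q).symm
        (ExteriorAlgebra.ι R m₁ * ExteriorAlgebra.ι R m₂ * ExteriorAlgebra.ι R m₃) =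
      ι Q m₁ * ι Q m₂ * ι Q m₃ - QuadraticMap.associated Q m₂ m₃ • ι Q m₁
        + QuadraticMap.associated Q m₁ m₃ • ι Q m₂ - QuadraticMap.associated Q m₁ m₂ • ι Q m₃ := by
  rw [mul_assoc, equivExterior_symm_ι_mul, equivExterior_symm_ι_mul_ι]
  simp only [map_sub, contractLeft_ι_mul, contractLeft_ι, contractLeft_algebraMap, mul_sub,
    ← Algebra.commutes, ← Algebra.smul_def, mul_assoc]
  abel

end CliffordAlgebra

namespace LinearMap.BilinForm

variable {R V M ι : Type*} [CommRing R] [AddCommGroup V] [Module R V] [AddCommGroup M]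
  [Module R M] {B : LinearMap.BilinForm R V}
  {bs : Module.Basis ι R V} {ds : ι → V}

def IsDualBasis (B : LinearMap.BilinForm R V) (bs : Module.Basis ι R V) (ds : ι → V) : Prop :=
  ∀ a, B (ds a) = bs.coord a

theorem IsDualBasis.of_apply_basis [DecidableEq ι]
    (h : ∀ a b, B (ds a) (bs b) = if a = b then 1 else 0) : B.IsDualBasis bs ds :=
  fun a => bs.ext fun b => by simp [h, Finsupp.single_apply, eq_comm]

variable [Fintype ι]

theorem IsDualBasis.sum_apply_smul_basis (hds : B.IsDualBasis bs ds) (y : V) :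
    ∑ a, B (ds a) y • bs a = y := by
  simp_rw [hds _, Module.Basis.coord_apply, bs.sum_repr]

theorem IsDualBasis.eq_zero_of_forall_apply_basis (hds : B.IsDualBasis bs ds)
    (hB : ∀ x y, B x y = B y x) {z : V} (hz : ∀ b, B z (bs b) = 0) : z = 0 := by
  have hBz : B z = 0 := bs.ext hz
  rw [← hds.sum_apply_smul_basis z]
  simp [hB _ z, hBz]

theorem IsDualBasis.sum_apply_smul_dual (hds : B.IsDualBasis bs ds)
    (hB : ∀ x y, B x y = B y x) (y : V) : ∑ a, B y (bs a) • ds a = y := by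
  rw [← sub_eq_zero]
  refine hds.eq_zero_of_forall_apply_basis hB fun b => ?_
  simp [hds _]

theorem IsDualBasis.sum_apply_smul_map_basis (hds : B.IsDualBasis bs ds) (f : V →ₗ[R] M)
    (y : V) : ∑ a, B (ds a) y • f (bs a) = f y := by
  conv_rhs => rw [← hds.sum_apply_smul_basis y]
  simp

theorem IsDualBasis.sum_apply_smul_map_dual (hds : B.IsDualBasis bs ds)
    (hB : ∀ x y, B x y = B y x) (f : V →ₗ[R] M) (y : V) :
    ∑ a, B y (bs a) • f (ds a) = f y := by
  conv_rhs => rw [← hds.sum_apply_smul_dual hB y]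
  simp

theorem IsDualBasis.sum_basis_dual_comm (hds : B.IsDualBasis bs ds)
    (hB : ∀ x y, B x y = B y x) (β : V →ₗ[R] V →ₗ[R] M) :
    ∑ a, β (bs a) (ds a) = ∑ a, β (ds a) (bs a) := by
  calc ∑ a, β (bs a) (ds a) = ∑ a, ∑ b, B (ds b) (ds a) • β (bs a) (bs b) := by
        simp_rw [← hds.sum_apply_smul_map_basis (β (bs _)) (ds _)]
    _ = ∑ b, ∑ a, B (ds a) (ds b) • β (bs a) (bs b) := by
        rw [sum_comm]
        exact sum_congr rfl fun b _ => sum_congr rfl fun a _ => by rw [hB]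
    _ = ∑ b, β (ds b) (bs b) :=
        sum_congr rfl fun b _ => hds.sum_apply_smul_map_basis (β.flip (bs b)) (ds b)

theorem IsDualBasis.sum_apply_map_basis_eq_of_adjoint (hds : B.IsDualBasis bs ds)
    (hB : ∀ x y, B x y = B y x) (β : V →ₗ[R] V →ₗ[R] M) {A A' : V →ₗ[R] V}
    (hA : ∀ p q, B (A p) q = B p (A' q)) :
    ∑ a, β (ds a) (A (bs a)) = ∑ a, β (A' (ds a)) (bs a) := by
  calc ∑ a, β (ds a) (A (bs a)) = ∑ a, ∑ b, B (ds b) (A (bs a)) • β (ds a) (bs b) := by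
        simp_rw [hds.sum_apply_smul_map_basis (β (ds _))]
    _ = ∑ b, ∑ a, B (A' (ds b)) (bs a) • β (ds a) (bs b) := by
        rw [sum_comm]
        exact sum_congr rfl fun b _ => sum_congr rfl fun a _ => by rw [hB, hA, hB]
    _ = ∑ b, β (A' (ds b)) (bs b) :=
        sum_congr rfl fun b _ => hds.sum_apply_smul_map_dual hB (β.flip (bs b)) (A' (ds b))

end LinearMap.BilinForm

namespace QuadraticLie

open LinearMap.BilinForm

variable {K g ι : Type*} [Field K] [LieRing g] [LieAlgebra K g] [Fintype ι]
  {B : LinearMap.BilinForm K g} {bs : Module.Basis ι K g} {ds : ι → g}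

theorem apply_lie_left (hinv : ∀ x y z, B ⁅x, y⁆ z = B x ⁅y, z⁆) (x p q : g) :
    B ⁅x, p⁆ q = B p ⁅q, x⁆ := by
  rw [← lie_skew, map_neg, LinearMap.neg_apply, hinv, ← lie_skew q, map_neg]

theorem sum_dual_lie_basis {M : Type*} [AddCommGroup M] [Module K M]
    (hds : B.IsDualBasis bs ds) (hB : ∀ x y, B x y = B y x)
    (hinv : ∀ x y z, B ⁅x, y⁆ z = B x ⁅y, z⁆) (β : g →ₗ[K] g →ₗ[K] M) (x : g) :
    ∑ a, β (ds a) ⁅x, bs a⁆ = ∑ a, β ⁅ds a, x⁆ (bs a) := by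
  have h := hds.sum_apply_map_basis_eq_of_adjoint hB β (A := LieAlgebra.ad K g x)
    (A' := -LieAlgebra.ad K g x) fun p q => by simpa using apply_lie_left hinv x p q
  simpa using h

theorem sum_apply_dual_lie_basis_eq_zero [CharZero K] (hds : B.IsDualBasis bs ds)
    (hB : ∀ x y, B x y = B y x) (hinv : ∀ x y z, B ⁅x, y⁆ z = B x ⁅y, z⁆) (x : g) :
    ∑ a, B (ds a) ⁅x, bs a⁆ = 0 := by
  refine self_eq_neg.mp ?_
  calc ∑ a, B (ds a) ⁅x, bs a⁆ = ∑ a, (B ∘ₗ LieAlgebra.ad K g x) (bs a) (ds a) := by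
        simp [hB (ds _)]
    _ = ∑ a, (B ∘ₗ LieAlgebra.ad K g x) (ds a) (bs a) := hds.sum_basis_dual_comm hB _
    _ = -∑ a, B ⁅ds a, x⁆ (bs a) := by
        rw [← sum_neg_distrib]
        exact sum_congr rfl fun a _ => by
          rw [LinearMap.comp_apply, LieAlgebra.ad_apply, ← lie_skew, map_neg, LinearMap.neg_apply]
    _ = -∑ a, B (ds a) ⁅x, bs a⁆ := by rw [sum_dual_lie_basis hds hB hinv B x]

theorem sum_lie_dual_basis_eq_zero [CharZero K] (hds : B.IsDualBasis bs ds)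
    (hB : ∀ x y, B x y = B y x) (hinv : ∀ x y z, B ⁅x, y⁆ z = B x ⁅y, z⁆) :
    ∑ a, ⁅ds a, bs a⁆ = 0 := by
  refine hds.eq_zero_of_forall_apply_basis hB fun c => ?_
  calc B (∑ a, ⁅ds a, bs a⁆) (bs c) = -∑ a, B (ds a) ⁅bs c, bs a⁆ := by
        rw [map_sum, LinearMap.sum_apply, ← sum_neg_distrib]
        exact sum_congr rfl fun a _ => by rw [hinv, ← lie_skew, map_neg]
    _ = 0 := by rw [sum_apply_dual_lie_basis_eq_zero hds hB hinv, neg_zero]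

variable {A : Type*} [Ring A] [Algebra K A]

-- For a Clifford map `v`, `liftAd bs ds v x` is `γ(x) = q(λ(ad x))` and `cubic bs ds v` is `q(Θ)`,
-- the latter with the first index of the structure constants already contracted.
noncomputable def liftAd (bs : Module.Basis ι K g) (ds : ι → g) (v : g →ₗ[K] A) (x : g) : A :=
  (2⁻¹ : K) • ∑ a, v ⁅x, bs a⁆ * v (ds a)

noncomputable def cubic (bs : Module.Basis ι K g) (ds : ι → g) (v : g →ₗ[K] A) : A :=
  (-(6 : K)⁻¹) • ∑ b, ∑ e, v ⁅ds b, ds e⁆ * v (bs b) * v (bs e)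

variable {v : g →ₗ[K] A}

theorem anticomm_triple (hv : ∀ x y, v x * v y + v y * v x = B x y • (1 : A)) (p q r x : g) :
    v p * v q * v r * v x + v x * (v p * v q * v r) =
      B p x • (v q * v r) - B q x • (v p * v r) + B r x • (v p * v q) := by
  have e : ∀ p q r y : A, p * q * r * y + y * (p * q * r) =
      (p * y + y * p) * q * r - p * (q * y + y * q) * r + p * q * (r * y + y * r) := by
    intros; noncomm_ring
  rw [e, hv, hv, hv]
  simp only [smul_mul_assoc, mul_smul_comm, one_mul, mul_one]

theorem liftAd_mul_sub_mul [CharZero K] (hds : B.IsDualBasis bs ds) (hB : ∀ x y, B x y = B y x)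
    (hinv : ∀ x y z, B ⁅x, y⁆ z = B x ⁅y, z⁆)
    (hv : ∀ x y, v x * v y + v y * v x = B x y • (1 : A)) (x y : g) :
    liftAd bs ds v x * v y - v y * liftAd bs ds v x = v ⁅x, y⁆ := by
  have hterm : ∀ a, v ⁅x, bs a⁆ * v (ds a) * v y - v y * (v ⁅x, bs a⁆ * v (ds a)) =
      B (ds a) y • v ⁅x, bs a⁆ - B ⁅x, bs a⁆ y • v (ds a) := by
    intro a
    have e : ∀ p q r : A, p * q * r - r * (p * q) = p * (q * r + r * q) - (p * r + r * p) * q := by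
      intros; noncomm_ring
    rw [e, hv, hv, mul_smul_comm, smul_mul_assoc, mul_one, one_mul]
  have h₁ : ∑ a, B (ds a) y • v ⁅x, bs a⁆ = v ⁅x, y⁆ :=
    hds.sum_apply_smul_map_basis (v ∘ₗ LieAlgebra.ad K g x) y
  have h₂ : ∑ a, B ⁅x, bs a⁆ y • v (ds a) = -v ⁅x, y⁆ := by
    simp_rw [apply_lie_left hinv, hB (bs _), hds.sum_apply_smul_map_dual hB v, ← map_neg, lie_skew]
  rw [liftAd, smul_mul_assoc, mul_smul_comm, ← smul_sub, sum_mul, mul_sum, ← sum_sub_distrib]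
  simp_rw [hterm]
  rw [sum_sub_distrib, h₁, h₂]
  module

theorem cubic_mul_add_mul [CharZero K] (hds : B.IsDualBasis bs ds) (hB : ∀ x y, B x y = B y x)
    (hinv : ∀ x y z, B ⁅x, y⁆ z = B x ⁅y, z⁆)
    (hv : ∀ x y, v x * v y + v y * v x = B x y • (1 : A)) (x : g) :
    cubic bs ds v * v x + v x * cubic bs ds v = liftAd bs ds v x := by
  set S := ∑ a, v ⁅x, bs a⁆ * v (ds a) with hS
  have h₁ : ∑ b, ∑ e, B ⁅ds b, ds e⁆ x • (v (bs b) * v (bs e)) = -S := by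
    calc _ = ∑ b, v (bs b) * v ⁅x, ds b⁆ := sum_congr rfl fun b _ => by
            simp_rw [apply_lie_left hinv]
            exact hds.sum_apply_smul_map_basis (LinearMap.mulLeft K (v (bs b)) ∘ₗ v) _
      _ = -S := by
            have h := sum_dual_lie_basis hds hB hinv ((LinearMap.mul K A).compl₁₂ v v).flip x
            simp only [LinearMap.flip_apply, LinearMap.compl₁₂_apply, LinearMap.mul_apply'] at h
            rw [hS, h, ← sum_neg_distrib]
            exact sum_congr rfl fun a _ => by rw [← lie_skew, map_neg, mul_neg]
  have hswap : ∑ a, v ⁅x, ds a⁆ * v (bs a) = S :=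
    (hds.sum_basis_dual_comm hB ((LinearMap.mul K A).compl₁₂ (v ∘ₗ LieAlgebra.ad K g x) v)).symm
  have h₂ : ∑ b, ∑ e, B (bs b) x • (v ⁅ds b, ds e⁆ * v (bs e)) = S := by
    rw [sum_comm, ← hswap]
    refine sum_congr rfl fun e _ => ?_
    simp_rw [hB (bs _) x]
    exact hds.sum_apply_smul_map_dual hB (LinearMap.mulRight K (v (bs e)) ∘ₗ v ∘ₗ
      (LieAlgebra.ad K g : g →ₗ[K] Module.End K g).flip (ds e)) x
  have h₃ : ∑ b, ∑ e, B (bs e) x • (v ⁅ds b, ds e⁆ * v (bs b)) = -S := by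
    rw [← hswap, ← sum_neg_distrib]
    refine sum_congr rfl fun b _ => ?_
    simp_rw [hB (bs _) x]
    refine (hds.sum_apply_smul_map_dual hB (LinearMap.mulRight K (v (bs b)) ∘ₗ v ∘ₗ
      LieAlgebra.ad K g (ds b)) x).trans ?_
    rw [LinearMap.comp_apply, LinearMap.comp_apply, LieAlgebra.ad_apply,
      LinearMap.mulRight_apply, ← lie_skew, map_neg, neg_mul]
  rw [cubic, smul_mul_assoc, mul_smul_comm, ← smul_add, sum_mul, mul_sum, ← sum_add_distrib]
  simp_rw [sum_mul, mul_sum, ← sum_add_distrib, anticomm_triple hv, sum_add_distrib,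
    sum_sub_distrib, h₁, h₂, h₃]
  rw [liftAd]
  module

theorem liftAd_commutator_triple [CharZero K] (hds : B.IsDualBasis bs ds)
    (hB : ∀ x y, B x y = B y x) (hinv : ∀ x y z, B ⁅x, y⁆ z = B x ⁅y, z⁆)
    (hv : ∀ x y, v x * v y + v y * v x = B x y • (1 : A)) (x p q r : g) :
    liftAd bs ds v x * (v p * v q * v r) - v p * v q * v r * liftAd bs ds v x =
      v ⁅x, p⁆ * v q * v r + v p * v ⁅x, q⁆ * v r + v p * v q * v ⁅x, r⁆ := by
  have e : ∀ a p q r : A, a * (p * q * r) - p * q * r * a =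
      (a * p - p * a) * q * r + p * (a * q - q * a) * r + p * q * (a * r - r * a) := by
    intros; noncomm_ring
  simp only [e, liftAd_mul_sub_mul hds hB hinv hv]

theorem liftAd_mul_cubic [CharZero K] (hds : B.IsDualBasis bs ds) (hB : ∀ x y, B x y = B y x)
    (hinv : ∀ x y z, B ⁅x, y⁆ z = B x ⁅y, z⁆)
    (hv : ∀ x y, v x * v y + v y * v x = B x y • (1 : A)) (x : g) :
    liftAd bs ds v x * cubic bs ds v = cubic bs ds v * liftAd bs ds v x := by
  have h₂ : ∑ b, ∑ e, v ⁅ds b, ds e⁆ * v ⁅x, bs b⁆ * v (bs e) =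
      ∑ b, ∑ e, v ⁅⁅ds b, x⁆, ds e⁆ * v (bs b) * v (bs e) := by
    conv_lhs => rw [sum_comm]
    conv_rhs => rw [sum_comm]
    refine sum_congr rfl fun e _ => ?_
    have h := sum_dual_lie_basis hds hB hinv (((LinearMap.mul K A).compl₁₂ (v ∘ₗ
      (LieAlgebra.ad K g : g →ₗ[K] Module.End K g).flip (ds e)) v).compr₂
      (LinearMap.mulRight K (v (bs e)))) x
    simpa only [LinearMap.compr₂_apply, LinearMap.compl₁₂_apply, LinearMap.mul_apply',
      LinearMap.comp_apply, LinearMap.flip_apply, LinearMap.mulRight_apply, LieHom.coe_toLinearMap,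
      LieAlgebra.ad_apply] using h
  have h₃ : ∑ b, ∑ e, v ⁅ds b, ds e⁆ * v (bs b) * v ⁅x, bs e⁆ =
      ∑ b, ∑ e, v ⁅ds b, ⁅ds e, x⁆⁆ * v (bs b) * v (bs e) := by
    refine sum_congr rfl fun b _ => ?_
    have h := sum_dual_lie_basis hds hB hinv ((LinearMap.mul K A).compl₁₂
      (LinearMap.mulRight K (v (bs b)) ∘ₗ v ∘ₗ LieAlgebra.ad K g (ds b)) v) x
    simpa only [LinearMap.compr₂_apply, LinearMap.compl₁₂_apply, LinearMap.mul_apply',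
      LinearMap.comp_apply, LinearMap.flip_apply, LinearMap.mulRight_apply, LieHom.coe_toLinearMap,
      LieAlgebra.ad_apply] using h
  have hjacobi : ∀ b e, ⁅x, ⁅ds b, ds e⁆⁆ + ⁅⁅ds b, x⁆, ds e⁆ + ⁅ds b, ⁅ds e, x⁆⁆ = 0 := by
    intro b e
    rw [leibniz_lie, ← lie_skew x, ← lie_skew x (ds e), neg_lie, lie_neg]
    abel
  rw [← sub_eq_zero, cubic, mul_smul_comm, smul_mul_assoc, ← smul_sub, mul_sum, sum_mul,
    ← sum_sub_distrib]
  simp_rw [mul_sum, sum_mul, ← sum_sub_distrib, liftAd_commutator_triple hds hB hinv hv,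
    sum_add_distrib, h₂, h₃, ← sum_add_distrib, ← add_mul, ← map_add, hjacobi, map_zero, zero_mul,
    sum_const_zero, smul_zero]

theorem mul_cubic_of_anticomm {w : A} (hw : ∀ x, w * v x = -(v x * w)) :
    w * cubic bs ds v = -(cubic bs ds v * w) := by
  have hterm : ∀ p q r, w * (v p * v q * v r) = -(v p * v q * v r * w) := by
    intro p q r
    calc w * (v p * v q * v r) = w * v p * v q * v r := by noncomm_ring
      _ = -(v p * (w * v q) * v r) := by rw [hw]; noncomm_ring
      _ = v p * v q * (w * v r) := by rw [hw]; noncomm_ring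
      _ = -(v p * v q * v r * w) := by rw [hw]; noncomm_ring
  simp_rw [cubic, mul_smul_comm, smul_mul_assoc, mul_sum, sum_mul, hterm, sum_neg_distrib,
    smul_neg]

theorem map_liftAd {σ : A →ₐ[K] A} (hσ : ∀ x, σ (v x) = -v x) (x : g) :
    σ (liftAd bs ds v x) = liftAd bs ds v x := by
  simp [liftAd, hσ]

theorem cubic_mul_sub_map_mul_add_sum_eq_zero [CharZero K] (hds : B.IsDualBasis bs ds)
    (hB : ∀ x y, B x y = B y x) (hinv : ∀ x y z, B ⁅x, y⁆ z = B x ⁅y, z⁆)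
    (hv : ∀ x y, v x * v y + v y * v x = B x y • (1 : A)) {σ : A →ₐ[K] A}
    (hσ : ∀ x, σ (v x) = -v x) {w : ι → A} (hσw : ∀ a, σ (w a) = -w a)
    (hw : ∀ a x, w a * v x = -(v x * w a)) (μ : g) :
    let X := liftAd bs ds v μ - ∑ a, v (bs a) * w a
    cubic bs ds v * X - σ X * cubic bs ds v + ∑ a, liftAd bs ds v (bs a) * w a = 0 := by
  intro X
  have hσX : σ X = X := by simp [X, map_liftAd hσ, hσ, hσw]
  have hterm : ∀ a, cubic bs ds v * (v (bs a) * w a) - v (bs a) * w a * cubic bs ds v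
      = liftAd bs ds v (bs a) * w a := by
    intro a
    rw [← cubic_mul_add_mul hds hB hinv hv, add_mul, mul_assoc, mul_assoc (v _),
      mul_cubic_of_anticomm (hw a)]
    noncomm_ring
  rw [hσX]
  simp only [X, mul_sub, sub_mul, liftAd_mul_cubic hds hB hinv hv, mul_sum, sum_mul]
  simp [← hterm, sum_sub_distrib]

theorem sum_apply_dual_lie_smul_mul (hds : B.IsDualBasis bs ds) (f : g →ₗ[K] A) :
    ∑ a, ∑ b, ∑ e, B (ds a) ⁅ds b, ds e⁆ • (f (bs a) * f (bs b) * f (bs e)) =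
      ∑ b, ∑ e, f ⁅ds b, ds e⁆ * f (bs b) * f (bs e) := by
  rw [sum_comm]
  refine sum_congr rfl fun b _ => ?_
  rw [sum_comm]
  exact sum_congr rfl fun e _ => hds.sum_apply_smul_map_basis
    (LinearMap.mulRight K (f (bs e)) ∘ₗ LinearMap.mulRight K (f (bs b)) ∘ₗ f) _

section Clifford

open CliffordAlgebra

variable {E : Type*} [AddCommGroup E] [Module K E]

-- `Cl(g) ⊗ ΛE` (graded tensor product) is realized as the Clifford algebra of `g × E`.
variable (E) in
noncomputable def cliffordForm (B : LinearMap.BilinForm K g) : QuadraticForm K (g × E) :=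
  ((2 : K)⁻¹ • B.toQuadraticMap).prod 0

theorem polar_cliffordForm [CharZero K] (hB : ∀ x y, B x y = B y x) (p q : g × E) :
    QuadraticMap.polar (cliffordForm E B) p q = B p.1 q.1 := by
  simp [cliffordForm, hB q.1, QuadraticMap.polar]
  ring

theorem associated_cliffordForm [Invertible (2 : K)] (hB : ∀ x y, B x y = B y x) (p q : g × E) :
    QuadraticMap.associated (cliffordForm E B) p q = 2⁻¹ * B p.1 q.1 := by
  simp [cliffordForm, QuadraticMap.associated_left_inverse (S := K) hB]

theorem ι_inl_mul_add [CharZero K] (hB : ∀ x y, B x y = B y x) (x y : g) :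
    CliffordAlgebra.ι (cliffordForm E B) (x, 0) * CliffordAlgebra.ι _ (y, 0) +
      CliffordAlgebra.ι _ (y, 0) * CliffordAlgebra.ι _ (x, 0) = B x y • 1 := by
  rw [ι_mul_ι_add_swap, polar_cliffordForm hB, Algebra.algebraMap_eq_smul_one]

theorem ι_inr_mul_ι_inl [CharZero K] (hB : ∀ x y, B x y = B y x) (u : E) (x : g) :
    CliffordAlgebra.ι (cliffordForm E B) (0, u) * CliffordAlgebra.ι _ (x, 0) =
      -(CliffordAlgebra.ι _ (x, 0) * CliffordAlgebra.ι _ (0, u)) := by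
  rw [ι_mul_ι_comm, polar_cliffordForm hB, map_zero, LinearMap.zero_apply, map_zero, zero_sub]

theorem equivExterior_symm_liftAd [CharZero K] [Invertible (2 : K)] (hds : B.IsDualBasis bs ds)
    (hB : ∀ x y, B x y = B y x) (hinv : ∀ x y z, B ⁅x, y⁆ z = B x ⁅y, z⁆) (μ : g) :
    (equivExterior (cliffordForm E B)).symm ((1 / 2 : K) • ∑ a,
        ExteriorAlgebra.ι K ((⁅μ, bs a⁆, 0) : g × E) * ExteriorAlgebra.ι K ((ds a, 0) : g × E)) =
      liftAd bs ds (CliffordAlgebra.ι (cliffordForm E B) ∘ₗ LinearMap.inl K g E) μ := by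
  have htrace : ∑ a, B ⁅μ, bs a⁆ (ds a) = 0 := by
    simpa [hB _ (ds _)] using sum_apply_dual_lie_basis_eq_zero hds hB hinv μ
  rw [map_smul, map_sum]
  simp_rw [CliffordAlgebra.equivExterior_symm_ι_mul_ι, associated_cliffordForm hB]
  rw [sum_sub_distrib, ← map_sum, ← mul_sum, htrace, mul_zero, map_zero, sub_zero, liftAd, one_div]
  rfl

theorem equivExterior_symm_cubic [CharZero K] [Invertible (2 : K)] (hds : B.IsDualBasis bs ds)
    (hB : ∀ x y, B x y = B y x) (hinv : ∀ x y z, B ⁅x, y⁆ z = B x ⁅y, z⁆) :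
    (equivExterior (cliffordForm E B)).symm ((-(6 : K)⁻¹) • ∑ a, ∑ b, ∑ e,
        B (ds a) ⁅ds b, ds e⁆ • (ExteriorAlgebra.ι K ((bs a, 0) : g × E) *
          ExteriorAlgebra.ι K ((bs b, 0) : g × E) * ExteriorAlgebra.ι K ((bs e, 0) : g × E))) =
      cubic bs ds (CliffordAlgebra.ι (cliffordForm E B) ∘ₗ LinearMap.inl K g E) := by
  set f := CliffordAlgebra.ι (cliffordForm E B) ∘ₗ LinearMap.inl K g E
  have hcasimir := sum_lie_dual_basis_eq_zero hds hB hinv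
  have h₁ : ∑ b, ∑ e, (2⁻¹ * B (bs b) (bs e)) • f ⁅ds b, ds e⁆ = 0 := by
    simp_rw [mul_smul, ← smul_sum]
    have hinner : ∀ b, ∑ e, B (bs b) (bs e) • f ⁅ds b, ds e⁆ = f ⁅ds b, bs b⁆ := fun b =>
      hds.sum_apply_smul_map_dual hB (f ∘ₗ LieAlgebra.ad K g (ds b)) (bs b)
    simp_rw [hinner, ← map_sum, hcasimir, map_zero, smul_zero]
  have h₂ : ∑ b, ∑ e, (2⁻¹ * B ⁅ds b, ds e⁆ (bs e)) • f (bs b) = 0 := by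
    simp_rw [← sum_smul, hinv, ← mul_sum, ← map_sum, hcasimir]
    simp
  have h₃ : ∑ b, ∑ e, (2⁻¹ * B ⁅ds b, ds e⁆ (bs b)) • f (bs e) = 0 := by
    rw [sum_comm]
    have hcasimir' : ∑ a, ⁅bs a, ds a⁆ = 0 := by
      rw [← neg_eq_zero, ← sum_neg_distrib]
      simp_rw [lie_skew]
      exact hcasimir
    simp_rw [← sum_smul, apply_lie_left hinv, ← mul_sum, ← map_sum, hcasimir']
    simp
  have hext := sum_apply_dual_lie_smul_mul hds (ExteriorAlgebra.ι K ∘ₗ LinearMap.inl K g E)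
  simp only [LinearMap.comp_apply, LinearMap.inl_apply] at hext
  rw [hext, map_smul, map_sum]
  have hf : ∀ x, CliffordAlgebra.ι (cliffordForm E B) ((x, 0) : g × E) = f x := fun _ => rfl
  simp only [map_sum, CliffordAlgebra.equivExterior_symm_ι_mul_ι_mul_ι, associated_cliffordForm hB,
    sum_sub_distrib, sum_add_distrib, hf, h₁, h₂, h₃, sub_zero, add_zero, cubic]

end Clifford

end QuadraticLie

theorem clifford_element_closed_general {g E ι : Type*} [Fintype ι] [DecidableEq ι]
    [LieRing g] [LieAlgebra ℝ g]
    [AddCommGroup E] [Module ℝ E]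
    (B : LinearMap.BilinForm ℝ g)
    (hBsym : ∀ x y, B x y = B y x)
    (hinv : ∀ x y z, B ⁅x, y⁆ z = B x ⁅y, z⁆)
    (bs : Module.Basis ι ℝ g) (ds : ι → g)
    (hds : ∀ a b, B (ds a) (bs b) = if a = b then 1 else 0)
    (φ : g →ₗ[ℝ] E) :
    letI Q2 : QuadraticForm ℝ g := (2 : ℝ)⁻¹ • B.toQuadraticMap
    letI QQ : QuadraticForm ℝ (g × E) := Q2.prod (0 : QuadraticForm ℝ E)
    letI qb : ExteriorAlgebra ℝ (g × E) ≃ₗ[ℝ] CliffordAlgebra QQ :=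
      (CliffordAlgebra.equivExterior QQ).symm
    letI γ : g → CliffordAlgebra QQ := fun μ =>
      qb ((1 / 2 : ℝ) • ∑ a,
        ExteriorAlgebra.ι ℝ ((⁅μ, bs a⁆, 0) : g × E) *
          ExteriorAlgebra.ι ℝ ((ds a, 0) : g × E))
    letI Θ : ExteriorAlgebra ℝ (g × E) := (-(6 : ℝ)⁻¹) • ∑ a, ∑ b, ∑ e,
      (B (ds a) ⁅ds b, ds e⁆) •
        (ExteriorAlgebra.ι ℝ ((bs a, 0) : g × E) *
          ExteriorAlgebra.ι ℝ ((bs b, 0) : g × E) *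
          ExteriorAlgebra.ι ℝ ((bs e, 0) : g × E))
    letI δ : CliffordAlgebra QQ → CliffordAlgebra QQ := fun x =>
      qb Θ * x - CliffordAlgebra.involute x * qb Θ
    ∀ μ : g,
      δ (γ μ - ∑ a, CliffordAlgebra.ι QQ ((bs a, 0) : g × E) *
            CliffordAlgebra.ι QQ ((0, φ (ds a)) : g × E))
        + ∑ a, γ (bs a) * CliffordAlgebra.ι QQ ((0, φ (ds a)) : g × E) = 0 := by
  intro μ
  have hdual := LinearMap.BilinForm.IsDualBasis.of_apply_basis hds
  have key := QuadraticLie.cubic_mul_sub_map_mul_add_sum_eq_zero hdual hBsym hinv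
    (v := CliffordAlgebra.ι (QuadraticLie.cliffordForm E B) ∘ₗ LinearMap.inl ℝ g E)
    (QuadraticLie.ι_inl_mul_add hBsym) (σ := CliffordAlgebra.involute)
    (fun _ => CliffordAlgebra.involute_ι _)
    (w := fun a => CliffordAlgebra.ι (QuadraticLie.cliffordForm E B) (0, φ (ds a)))
    (fun _ => CliffordAlgebra.involute_ι _) (fun _ x => QuadraticLie.ι_inr_mul_ι_inl hBsym _ x) μ
  simp only [← QuadraticLie.equivExterior_symm_liftAd hdual hBsym hinv,
    ← QuadraticLie.equivExterior_symm_cubic hdual hBsym hinv] at key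
  exact key

/-- Let `g` be a quadratic Lie algebra, `E` a vector space, `φ : g → E` linear with
`φ^a = φ(e^a)`.  Realizing the ℤ₂-graded tensor product `Cl(g) ⊗ ΛE` as the Clifford
algebra of `g × E` with the form `Q₂ ⊕ 0`, the element `γ − Σ_a e_a ⊗ φ^a` (an affine
function of `μ ∈ g`, where `γ(μ) = q(λ(ad_μ))`) is closed under the differential
`δ + Σ_a (∂/∂μ^a) ⊗ φ^a`, where `δ = [q(Θ),·]` is the Clifford differential; since the
element is affine in `μ`, the derivative term is `Σ_a γ(e_a)·φ^a`. -/
theorem clifford_element_closed {g E ι : Type*} [Fintype ι] [DecidableEq ι]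
    [LieRing g] [LieAlgebra ℝ g] [Module.Finite ℝ g]
    [AddCommGroup E] [Module ℝ E]
    (B : LinearMap.BilinForm ℝ g)
    (hBsym : ∀ x y, B x y = B y x) (hB : B.Nondegenerate)
    (hinv : ∀ x y z, B ⁅x, y⁆ z = B x ⁅y, z⁆)
    (bs : Module.Basis ι ℝ g) (ds : ι → g)
    (hds : ∀ a b, B (ds a) (bs b) = if a = b then 1 else 0)
    (φ : g →ₗ[ℝ] E) :
    letI Q2 : QuadraticForm ℝ g := (2 : ℝ)⁻¹ • B.toQuadraticMap
    letI QQ : QuadraticForm ℝ (g × E) := Q2.prod (0 : QuadraticForm ℝ E)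
    letI qb : ExteriorAlgebra ℝ (g × E) ≃ₗ[ℝ] CliffordAlgebra QQ :=
      (CliffordAlgebra.equivExterior QQ).symm
    letI γ : g → CliffordAlgebra QQ := fun μ =>
      qb ((1 / 2 : ℝ) • ∑ a,
        ExteriorAlgebra.ι ℝ ((⁅μ, bs a⁆, 0) : g × E) *
          ExteriorAlgebra.ι ℝ ((ds a, 0) : g × E))
    letI Θ : ExteriorAlgebra ℝ (g × E) := (-(6 : ℝ)⁻¹) • ∑ a, ∑ b, ∑ e,
      (B (ds a) ⁅ds b, ds e⁆) •
        (ExteriorAlgebra.ι ℝ ((bs a, 0) : g × E) *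
          ExteriorAlgebra.ι ℝ ((bs b, 0) : g × E) *
          ExteriorAlgebra.ι ℝ ((bs e, 0) : g × E))
    letI δ : CliffordAlgebra QQ → CliffordAlgebra QQ := fun x =>
      qb Θ * x - CliffordAlgebra.involute x * qb Θ
    ∀ μ : g,
      δ (γ μ - ∑ a, CliffordAlgebra.ι QQ ((bs a, 0) : g × E) *
            CliffordAlgebra.ι QQ ((0, φ (ds a)) : g × E))
        + ∑ a, γ (bs a) * CliffordAlgebra.ι QQ ((0, φ (ds a)) : g × E) = 0 :=
  clifford_element_closed_general B hBsym hinv bs ds hds φ
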